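/- arXiv:1611.09616 — 6 statements merged into one kernel-verified Lean document; each statement's English description precedes it below -/
import Mathlib

section
/- For a prime p and integer k ≥ 1, the weight on ℤ_{p^k} defined by w(0)=0, w(x) = p/(p−1) if x ∈ p^{k−1}ℤ_{p^k} \ {0}, and w(x)=1 otherwise, is a homogeneous weight (with average value γ = 1). -/
/-!
Every nonzero cyclic submodule `N` of `ℤ/p^k` contains `S = p^{k-1}ℤ/p^kℤ`, since `x` times
its `ZMod` inverse is `gcd(x, p^k) = p^j` with `j < k`; and `S` has `p` elements. Hence the
weight sums over `N` to `(|N| - p) + (p - 1) · p/(p - 1) = |N|`. Whether `x` is zero or lies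
in `S` only depends on `span {x}`, so `w` is constant on generators of the same submodule.
-/

open Submodule

section Weight

variable {R M : Type*} [Ring R] [AddCommGroup M] [Module R M] {S : Submodule R M} {w : M → ℝ}

theorem weight_eq_of_span_singleton_eq {c : ℝ} (hwS : ∀ x ≠ 0, x ∈ S → w x = c)
    (hwother : ∀ x ∉ S, w x = 1) {x y : M} (h : span R {x} = span R {y}) : w x = w y := by
  have hzero : x = 0 ↔ y = 0 := by
    rw [← span_singleton_eq_bot (R := R), h, span_singleton_eq_bot]
  have hmem : x ∈ S ↔ y ∈ S := by
    rw [← span_singleton_le_iff_mem, h, span_singleton_le_iff_mem]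
  by_cases hx0 : x = 0
  · rw [hx0, hzero.1 hx0]
  by_cases hxS : x ∈ S
  · rw [hwS x hx0 hxS, hwS y (hzero.not.1 hx0) (hmem.1 hxS)]
  · rw [hwother x hxS, hwother y (hmem.not.1 hxS)]

theorem finsum_mem_weight_eq_card [Finite M] {N : Submodule R M} (hSN : S ≤ N) (hS : S ≠ ⊥)
    (hw0 : w 0 = 0) (hwS : ∀ x ≠ 0, x ∈ S → w x = Nat.card S / (Nat.card S - 1))
    (hwother : ∀ x ∉ S, w x = 1) :
    ∑ᶠ y ∈ (N : Set M), w y = Nat.card N := by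
  classical
  have := Fintype.ofFinite M
  set s := (S : Set M).toFinset
  set n := (N : Set M).toFinset
  have hsn : s ⊆ n := Set.toFinset_mono hSN
  have hs0 : (0 : M) ∈ s := by simp [s]
  have hcard_s : (s.card : ℝ) = Nat.card S := by simp [s]
  have hcard_n : (n.card : ℝ) = Nat.card N := by simp [n]
  have hs1 : 1 < s.card := by
    obtain ⟨x, hxS, hx0⟩ := (Submodule.ne_bot_iff S).1 hS
    exact Finset.one_lt_card.2 ⟨0, hs0, x, by simpa [s] using hxS, hx0.symm⟩
  have sum_outside : ∑ y ∈ n \ s, w y = n.card - s.card := by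
    rw [Finset.sum_congr rfl fun y hy => hwother y (by simpa [s] using (Finset.mem_sdiff.1 hy).2)]
    simp [Finset.card_sdiff_of_subset hsn, Nat.cast_sub (Finset.card_le_card hsn)]
  have sum_inside : ∑ y ∈ s, w y = s.card := by
    have hw : ∀ y ∈ s.erase 0, w y = Nat.card S / (Nat.card S - 1) := fun y hy =>
      hwS y (Finset.ne_of_mem_erase hy) (by simpa [s] using Finset.mem_of_mem_erase hy)
    rw [← Finset.sum_erase_add s w hs0, hw0, add_zero, Finset.sum_congr rfl hw, Finset.sum_const,
      Finset.card_erase_of_mem hs0, nsmul_eq_mul, ← hcard_s,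
      Nat.cast_sub hs1.le, Nat.cast_one]
    have : (s.card : ℝ) - 1 ≠ 0 := sub_ne_zero.2 (by exact_mod_cast hs1.ne')
    field_simp
  rw [finsum_mem_eq_toFinset_sum, ← Finset.sum_sdiff hsn, sum_outside, sum_inside, hcard_n]
  ring

end Weight

namespace ZMod

theorem card_span_singleton {n : ℕ} (a : ZMod n) :
    Nat.card (span (ZMod n) {a}) = addOrderOf a := by
  rw [← Nat.card_zmultiples, ← span_singleton_toAddSubgroup_eq_zmultiples,
    ← restrictScalars_span ℤ (ZMod n) ZMod.intCast_surjective]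
  rfl

variable {p k : ℕ}

theorem pow_pred_ne_zero (hp : p.Prime) (hk : 1 ≤ k) : (p : ZMod (p ^ k)) ^ (k - 1) ≠ 0 := by
  rw [← Nat.cast_pow, Ne, ZMod.natCast_eq_zero_iff, Nat.pow_dvd_pow_iff_le_right hp.one_lt]
  omega

theorem addOrderOf_pow_pred (hp : p.Prime) (hk : 1 ≤ k) :
    addOrderOf ((p : ZMod (p ^ k)) ^ (k - 1)) = p := by
  have := Fact.mk hp
  refine addOrderOf_eq_prime ?_ (pow_pred_ne_zero hp hk)
  rw [nsmul_eq_mul, ← pow_succ', Nat.sub_add_cancel hk, ← Nat.cast_pow, ZMod.natCast_self]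

theorem pow_pred_mem_span_singleton (hp : p.Prime) {x : ZMod (p ^ k)} (hx : x ≠ 0) :
    (p : ZMod (p ^ k)) ^ (k - 1) ∈ span (ZMod (p ^ k)) {x} := by
  obtain ⟨j, hjk, hj⟩ := (Nat.dvd_prime_pow hp).1 (Nat.gcd_dvd_right x.val (p ^ k))
  have hjk' : j < k := by
    refine hjk.lt_of_ne fun hj_eq => hx ?_
    have : NeZero p := ⟨hp.ne_zero⟩
    rw [← ZMod.natCast_zmod_val x, ZMod.natCast_eq_zero_iff]
    simpa [hj, hj_eq] using Nat.gcd_dvd_left x.val (p ^ k)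
  rw [mem_span_singleton]
  refine ⟨(p : ZMod (p ^ k)) ^ (k - 1 - j) * x⁻¹, ?_⟩
  rw [smul_eq_mul, mul_assoc, mul_comm x⁻¹, ZMod.mul_inv_eq_gcd, hj, Nat.cast_pow, ← pow_add]
  congr 1
  omega

end ZMod

/-- for a prime `p` and `k ≥ 1`, the weight on `ℤ_{p^k}` given by
`w 0 = 0`, `w x = p/(p-1)` for nonzero `x ∈ p^{k-1}ℤ_{p^k}` and `w x = 1` otherwise,
is a homogeneous weight with average value `γ = 1`. -/
theorem stmt3 (p k : ℕ) (hp : p.Prime) (hk : 1 ≤ k) (w : ZMod (p ^ k) → ℝ)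
    (hw0 : w 0 = 0)
    (hwsoc : ∀ x : ZMod (p ^ k), x ≠ 0 →
      x ∈ Submodule.span (ZMod (p ^ k)) {((p : ZMod (p ^ k)) ^ (k - 1))} →
      w x = (p : ℝ) / ((p : ℝ) - 1))
    (hwother : ∀ x : ZMod (p ^ k),
      x ∉ Submodule.span (ZMod (p ^ k)) {((p : ZMod (p ^ k)) ^ (k - 1))} → w x = 1) :
    (∀ x y : ZMod (p ^ k),
        Submodule.span (ZMod (p ^ k)) {x} = Submodule.span (ZMod (p ^ k)) {y} → w x = w y) ∧
    (∀ x : ZMod (p ^ k), x ≠ 0 →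
      ∑ᶠ y ∈ (Submodule.span (ZMod (p ^ k)) {x} : Set (ZMod (p ^ k))), w y =
        1 * (Nat.card (Submodule.span (ZMod (p ^ k)) {x}) : ℝ)) := by
  have hcard : Nat.card (span (ZMod (p ^ k)) {(p : ZMod (p ^ k)) ^ (k - 1)}) = p := by
    rw [ZMod.card_span_singleton, ZMod.addOrderOf_pow_pred hp hk]
  refine ⟨fun x y => weight_eq_of_span_singleton_eq hwsoc hwother, fun x hx => ?_⟩
  rw [one_mul]
  have : NeZero p := ⟨hp.ne_zero⟩
  refine finsum_mem_weight_eq_card ?_ ?_ hw0 (by rwa [hcard]) hwother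
  · exact (span_singleton_le_iff_mem _ _).2 (ZMod.pow_pred_mem_span_singleton hp hx)
  · exact span_singleton_eq_bot.not.2 (ZMod.pow_pred_ne_zero hp hk)
end

section
/- The weight on the matrix ring M₂(𝔽_q) defined by w(x) = 0 if x=0, w(x) = q if rank(x)=1, and w(x) = (q²−q−1)/(q−1) if rank(x)=2, is a homogeneous weight with average value γ = (q²−1)/q. -/
open scoped BigOperators

set_option linter.unusedSectionVars false
set_option maxHeartbeats 1000000

section Aux

variable {F : Type*} [Field F] [Fintype F] [DecidableEq F]

private lemma stmt4_rank_eq_zero_iff' {n : ℕ} (A : Matrix (Fin n) (Fin n) F) :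
    A.rank = 0 ↔ A = 0 := by
  constructor
  · intro h
    have h2 : LinearMap.range A.mulVecLin = ⊥ := Submodule.finrank_eq_zero.mp h
    ext i j
    have hm : A.mulVec (Pi.single j 1) ∈ LinearMap.range A.mulVecLin := ⟨_, rfl⟩
    have : A.mulVec (Pi.single j 1) = 0 := by simpa [h2] using hm
    have := congrFun this i
    simpa [Matrix.mulVec_single] using this
  · rintro rfl; exact Matrix.rank_zero

private lemma stmt4_rank_two_iff (A : Matrix (Fin 2) (Fin 2) F) : A.rank = 2 ↔ IsUnit A := by
  constructor
  · intro h
    rw [Matrix.isUnit_iff_isUnit_det, isUnit_iff_ne_zero]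
    intro hdet
    obtain ⟨v, hv, hv0⟩ := (Matrix.exists_mulVec_eq_zero_iff).mpr hdet
    have hker : v ∈ LinearMap.ker A.mulVecLin := by simpa using hv0
    have h1 : 1 ≤ Module.finrank F (LinearMap.ker A.mulVecLin) := by
      rw [Nat.one_le_iff_ne_zero]
      intro h0
      rw [Submodule.finrank_eq_zero] at h0
      exact hv (by simpa [h0] using hker)
    have := LinearMap.finrank_range_add_finrank_ker A.mulVecLin
    rw [Module.finrank_fintype_fun_eq_card] at this
    simp only [Fintype.card_fin] at this
    have hr : A.rank = Module.finrank F (LinearMap.range A.mulVecLin) := rfl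
    omega
  · intro h
    simpa using Matrix.rank_of_isUnit A h

private lemma stmt4_rank_one_struct (A : Matrix (Fin 2) (Fin 2) F) (h : A.rank = 1) :
    ∃ (c r : Fin 2 → F), c ≠ 0 ∧ r ≠ 0 ∧ A = Matrix.vecMulVec c r := by
  have h' : Module.finrank F (LinearMap.range A.mulVecLin) = 1 := h
  obtain ⟨v, hv0, hv⟩ := finrank_eq_one_iff'.mp h'
  have hcol : ∀ j, ∃ rj : F, rj • (v : Fin 2 → F) = fun i => A i j := by
    intro j
    have hmem : (fun i => A i j) ∈ LinearMap.range A.mulVecLin := by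
      refine ⟨Pi.single j 1, ?_⟩
      ext i; simp [Matrix.mulVecLin, Matrix.mulVec_single]
    obtain ⟨cj, hcj⟩ := hv ⟨_, hmem⟩
    exact ⟨cj, by simpa using congrArg Subtype.val hcj⟩
  choose r hr using hcol
  have hA : A = Matrix.vecMulVec (v : Fin 2 → F) r := by
    ext i j
    have := congrFun (hr j) i
    simp only [Pi.smul_apply, smul_eq_mul] at this
    simp [Matrix.vecMulVec_apply, ← this, mul_comm]
  refine ⟨v, r, ?_, ?_, hA⟩
  · exact fun hc => hv0 (Subtype.ext (by simpa using hc))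
  · intro hr0
    rw [hr0] at hA
    have : A = 0 := by rw [hA]; ext i j; simp [Matrix.vecMulVec_apply]
    rw [(stmt4_rank_eq_zero_iff' A).mpr this] at h
    omega

private lemma stmt4_mul_vecMulVec (a : Matrix (Fin 2) (Fin 2) F) (c r : Fin 2 → F) :
    a * Matrix.vecMulVec c r = Matrix.vecMulVec (a.mulVec c) r := by
  ext i j
  simp [Matrix.mul_apply, Matrix.vecMulVec_apply, Matrix.mulVec, dotProduct,
    Finset.sum_mul, mul_assoc, -Matrix.mulVec_fin_two]
  ring

private lemma stmt4_span_vecMulVec (c r : Fin 2 → F) (hc : c ≠ 0) :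
    ((Submodule.span (Matrix (Fin 2) (Fin 2) F) {Matrix.vecMulVec c r}) :
      Set (Matrix (Fin 2) (Fin 2) F)) =
      Set.range (fun v : Fin 2 → F => Matrix.vecMulVec v r) := by
  ext m
  simp only [SetLike.mem_coe, Submodule.mem_span_singleton, Set.mem_range]
  constructor
  · rintro ⟨a, rfl⟩
    exact ⟨a.mulVec c, by rw [smul_eq_mul, stmt4_mul_vecMulVec]⟩
  · rintro ⟨v, rfl⟩
    obtain ⟨k, hk⟩ : ∃ k, c k ≠ 0 := by
      by_contra h; push_neg at h; exact hc (funext fun k => h k)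
    refine ⟨Matrix.vecMulVec v (Pi.single k (c k)⁻¹), ?_⟩
    rw [smul_eq_mul, stmt4_mul_vecMulVec]
    have : (Matrix.vecMulVec v (Pi.single k (c k)⁻¹)).mulVec c = v := by
      funext i
      simp [Matrix.mulVec, dotProduct, Matrix.vecMulVec_apply, Pi.single_apply,
        Fin.sum_univ_two]
      fin_cases k <;> simp_all
    rw [this]

private lemma stmt4_vecMulVec_injective (r : Fin 2 → F) (hr : r ≠ 0) :
    Function.Injective (fun v : Fin 2 → F => Matrix.vecMulVec v r) := by
  obtain ⟨j, hj⟩ : ∃ j, r j ≠ 0 := by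
    by_contra h; push_neg at h; exact hr (funext fun j => h j)
  intro v w hvw
  funext i
  have := congrFun (congrFun hvw i) j
  simp only [Matrix.vecMulVec_apply] at this
  exact mul_right_cancel₀ hj this

private lemma stmt4_rank_vecMulVec_le (c r : Fin 2 → F) :
    (Matrix.vecMulVec c r).rank ≤ 1 := by
  rw [Matrix.vecMulVec_eq (Fin 1)]
  exact le_trans (Matrix.rank_mul_le _ _) (by
    exact min_le_of_left_le ((Matrix.rank_le_card_width _).trans (le_of_eq (Fintype.card_fin 1))))

private lemma stmt4_card_rank2 :
    ((Finset.univ : Finset (Matrix (Fin 2) (Fin 2) F)).filter fun m => m.rank = 2).card =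
      (Fintype.card F ^ 2 - 1) * (Fintype.card F ^ 2 - Fintype.card F) := by
  classical
  have e : (Matrix (Fin 2) (Fin 2) F)ˣ ≃ {m : Matrix (Fin 2) (Fin 2) F // IsUnit m} :=
    { toFun := fun u => ⟨u, u.isUnit⟩
      invFun := fun m => m.2.unit
      left_inv := fun u => Units.ext (by simp)
      right_inv := fun m => Subtype.ext m.2.unit_spec }
  have h1 : Nat.card (GL (Fin 2) F) =
      (Fintype.card F ^ 2 - 1) * (Fintype.card F ^ 2 - Fintype.card F) := by
    rw [Matrix.card_GL_field]
    simp [Fin.prod_univ_two]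
  have h2 : Nat.card {m : Matrix (Fin 2) (Fin 2) F // IsUnit m} = Nat.card (GL (Fin 2) F) :=
    (Nat.card_congr e).symm
  have h3 : ((Finset.univ : Finset (Matrix (Fin 2) (Fin 2) F)).filter fun m => m.rank = 2).card
      = Nat.card {m : Matrix (Fin 2) (Fin 2) F // IsUnit m} := by
    rw [Nat.card_eq_fintype_card, Fintype.card_subtype]
    congr 1
    ext m
    simp [stmt4_rank_two_iff]
  omega

end Aux

/-- the weight on `M₂(𝔽_q)` with `w x = 0` for `x = 0`, `w x = q` when
`rank x = 1` and `w x = (q² - q - 1)/(q - 1)` when `rank x = 2` is a homogeneous weight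
(for the left module structure of `M₂(𝔽_q)` over itself) with average value
`γ = (q² - 1)/q`. -/
theorem stmt4 {F : Type*} [Field F] [Fintype F] [DecidableEq F]
    (w : Matrix (Fin 2) (Fin 2) F → ℝ)
    (hw0 : w 0 = 0)
    (hw1 : ∀ x : Matrix (Fin 2) (Fin 2) F, x.rank = 1 → w x = (Fintype.card F : ℝ))
    (hw2 : ∀ x : Matrix (Fin 2) (Fin 2) F, x.rank = 2 →
      w x = ((Fintype.card F : ℝ) ^ 2 - (Fintype.card F : ℝ) - 1) /
              ((Fintype.card F : ℝ) - 1)) :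
    (∀ x y : Matrix (Fin 2) (Fin 2) F,
        Submodule.span (Matrix (Fin 2) (Fin 2) F) {x} =
          Submodule.span (Matrix (Fin 2) (Fin 2) F) {y} → w x = w y) ∧
    (∀ x : Matrix (Fin 2) (Fin 2) F, x ≠ 0 →
      ∑ᶠ y ∈ (Submodule.span (Matrix (Fin 2) (Fin 2) F) {x} :
          Set (Matrix (Fin 2) (Fin 2) F)), w y =
        (((Fintype.card F : ℝ) ^ 2 - 1) / (Fintype.card F : ℝ)) *
          (Nat.card (Submodule.span (Matrix (Fin 2) (Fin 2) F) {x}) : ℝ)) := by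
  classical
  set qn : ℕ := Fintype.card F with hqn
  have hq2 : 2 ≤ qn := Fintype.one_lt_card
  have hqR : (2 : ℝ) ≤ (qn : ℝ) := by exact_mod_cast hq2
  have hq0 : (qn : ℝ) ≠ 0 := by positivity
  have hq1 : (qn : ℝ) - 1 ≠ 0 := by nlinarith
  have hrank_le : ∀ m : Matrix (Fin 2) (Fin 2) F, m.rank ≤ 2 := fun m => by
    simpa using Matrix.rank_le_card_width m
  -- weight determined by rank
  have hweq : ∀ m m' : Matrix (Fin 2) (Fin 2) F, m.rank = m'.rank → w m = w m' := by
    intro m m' h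
    have h1 := hrank_le m
    have h0 : m.rank = 0 ∨ m.rank = 1 ∨ m.rank = 2 := by omega
    rcases h0 with h0 | h0 | h0
    · rw [(stmt4_rank_eq_zero_iff' m).mp h0, (stmt4_rank_eq_zero_iff' m').mp (h.symm.trans h0)]
    · rw [hw1 m h0, hw1 m' (h.symm.trans h0)]
    · rw [hw2 m h0, hw2 m' (h.symm.trans h0)]
  constructor
  · intro x y hxy
    have key : ∀ u v : Matrix (Fin 2) (Fin 2) F,
        Submodule.span (Matrix (Fin 2) (Fin 2) F) {u} =
          Submodule.span (Matrix (Fin 2) (Fin 2) F) {v} → u.rank ≤ v.rank := by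
      intro u v huv
      have hu : u ∈ Submodule.span (Matrix (Fin 2) (Fin 2) F) {v} :=
        huv ▸ Submodule.mem_span_singleton_self u
      obtain ⟨a, ha⟩ := Submodule.mem_span_singleton.mp hu
      rw [← ha, smul_eq_mul]
      exact Matrix.rank_mul_le_right a v
    exact hweq x y (le_antisymm (key x y hxy) (key y x hxy.symm))
  · intro x hx
    have hxr0 : x.rank ≠ 0 := fun h => hx ((stmt4_rank_eq_zero_iff' x).mp h)
    have hr : x.rank = 1 ∨ x.rank = 2 := by have := hrank_le x; omega
    rcases hr with h1 | h2
    · -- rank one case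
      obtain ⟨c, r, hc, hrne, hxeq⟩ := stmt4_rank_one_struct x h1
      set f : (Fin 2 → F) → Matrix (Fin 2) (Fin 2) F := fun v => Matrix.vecMulVec v r with hf
      have hsetf : ((Submodule.span (Matrix (Fin 2) (Fin 2) F) {x}) :
          Set (Matrix (Fin 2) (Fin 2) F)) = Set.range f := by
        rw [hxeq]; exact stmt4_span_vecMulVec c r hc
      have hinj : Function.Injective f := stmt4_vecMulVec_injective r hrne
      have hNat : (Nat.card (Submodule.span (Matrix (Fin 2) (Fin 2) F) {x}) : ℝ)
          = (qn : ℝ) ^ 2 := by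
        have : Nat.card (Submodule.span (Matrix (Fin 2) (Fin 2) F) {x})
            = Nat.card (Fin 2 → F) :=
          Nat.card_congr ((Equiv.setCongr hsetf).trans (Equiv.ofInjective f hinj).symm)
        rw [this, Nat.card_eq_fintype_card, Fintype.card_fun]
        push_cast
        simp [hqn]
      have hrange : Set.range f = ((Finset.univ.image f : Finset (Matrix (Fin 2) (Fin 2) F)) :
          Set (Matrix (Fin 2) (Fin 2) F)) := by simp
      have hsum : ∑ᶠ y ∈ ((Submodule.span (Matrix (Fin 2) (Fin 2) F) {x}) :
          Set (Matrix (Fin 2) (Fin 2) F)), w y = ∑ v : Fin 2 → F, w (f v) := by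
        rw [hsetf, hrange, finsum_mem_coe_finset,
          Finset.sum_image (fun a _ b _ h => hinj h)]
      have hterm : ∀ v : Fin 2 → F, w (f v) = if v = 0 then 0 else (qn : ℝ) := by
        intro v
        by_cases hv : v = 0
        · subst hv
          rw [if_pos rfl]
          have h00 : Matrix.vecMulVec (0 : Fin 2 → F) r = 0 := by
            ext i j; simp [Matrix.vecMulVec_apply]
          show w (Matrix.vecMulVec (0 : Fin 2 → F) r) = 0
          rw [h00, hw0]
        · rw [if_neg hv]
          apply hw1
          have hne : f v ≠ 0 := by
            intro h0
            apply hv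
            apply hinj
            rw [h0, hf]
            ext i j; simp [Matrix.vecMulVec_apply]
          have hle : (f v).rank ≤ 1 := stmt4_rank_vecMulVec_le v r
          have hne0 : (f v).rank ≠ 0 := fun h => hne ((stmt4_rank_eq_zero_iff' (f v)).mp h)
          omega
      rw [hsum, hNat]
      calc ∑ v : Fin 2 → F, w (f v)
          = ∑ v : Fin 2 → F, (if v = 0 then 0 else (qn : ℝ)) := by
            exact Finset.sum_congr rfl fun v _ => hterm v
        _ = ((qn : ℝ) ^ 2 - 1) / (qn : ℝ) * (qn : ℝ) ^ 2 := by
            rw [Finset.sum_ite, Finset.sum_const, Finset.sum_const]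
            have hone : ((Finset.univ : Finset (Fin 2 → F)).filter
                fun v => v = 0).card = 1 := by
              simp [Finset.filter_eq']
            have huniv : ((Finset.univ : Finset (Fin 2 → F))).card = qn ^ 2 := by
              rw [Finset.card_univ, Fintype.card_fun]; simp [hqn]
            have hsplit := Finset.card_filter_add_card_filter_not
              (s := (Finset.univ : Finset (Fin 2 → F))) (p := fun v => v = 0)
            have hcard : (((Finset.univ : Finset (Fin 2 → F))).filter
                fun v => ¬ v = 0).card = qn ^ 2 - 1 := by omega
            rw [hone, hcard, smul_zero, zero_add, nsmul_eq_mul]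
            have h1q : 1 ≤ qn ^ 2 := by nlinarith
            push_cast [Nat.cast_sub h1q]
            field_simp
    · -- rank two case
      have hu : IsUnit x := (stmt4_rank_two_iff x).mp h2
      have htop : Submodule.span (Matrix (Fin 2) (Fin 2) F) {x} = ⊤ := by
        rw [Submodule.eq_top_iff']
        intro m
        rw [Submodule.mem_span_singleton]
        refine ⟨m * (↑hu.unit⁻¹ : Matrix (Fin 2) (Fin 2) F), ?_⟩
        show m * (↑hu.unit⁻¹ : Matrix (Fin 2) (Fin 2) F) * x = m
        rw [mul_assoc]
        nth_rewrite 2 [← hu.unit_spec]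
        rw [Units.inv_mul, mul_one]
      have hNat : (Nat.card (Submodule.span (Matrix (Fin 2) (Fin 2) F) {x}) : ℝ)
          = (qn : ℝ) ^ 4 := by
        rw [htop]
        have : Nat.card (⊤ : Submodule (Matrix (Fin 2) (Fin 2) F) (Matrix (Fin 2) (Fin 2) F))
            = Nat.card (Matrix (Fin 2) (Fin 2) F) := Nat.card_congr (Equiv.Set.univ _)
        rw [this, Nat.card_eq_fintype_card]
        have : Fintype.card (Matrix (Fin 2) (Fin 2) F) = qn ^ 4 := by
          show Fintype.card (Fin 2 → Fin 2 → F) = qn ^ 4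
          rw [Fintype.card_fun, Fintype.card_fun]
          simp [hqn, pow_mul, ← pow_mul]
        rw [this]; push_cast; ring
      have hsum : ∑ᶠ y ∈ ((Submodule.span (Matrix (Fin 2) (Fin 2) F) {x}) :
          Set (Matrix (Fin 2) (Fin 2) F)), w y = ∑ m : Matrix (Fin 2) (Fin 2) F, w m := by
        rw [htop]
        rw [Submodule.top_coe, finsum_mem_univ, finsum_eq_sum_of_fintype]
      rw [hsum, hNat]
      -- decompose the total sum by rank
      have hterm : ∀ m : Matrix (Fin 2) (Fin 2) F,
          w m = (if m.rank = 1 then (qn : ℝ) else 0) +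
            (if m.rank = 2 then ((qn : ℝ) ^ 2 - (qn : ℝ) - 1) / ((qn : ℝ) - 1) else 0) := by
        intro m
        have h1 := hrank_le m
        have h0 : m.rank = 0 ∨ m.rank = 1 ∨ m.rank = 2 := by omega
        rcases h0 with h0 | h0 | h0
        · rw [(stmt4_rank_eq_zero_iff' m).mp h0, hw0]; simp [h0]
        · rw [hw1 m h0]; simp [h0]
        · rw [hw2 m h0]; simp [h0]
      have hN1 : ((Finset.univ : Finset (Matrix (Fin 2) (Fin 2) F)).filter
          fun m => m.rank = 1).card
          + ((Finset.univ : Finset (Matrix (Fin 2) (Fin 2) F)).filter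
          fun m => m.rank = 2).card + 1 = qn ^ 4 := by
        have hmem : ∀ m : Matrix (Fin 2) (Fin 2) F, m ∈ (Finset.univ :
            Finset (Matrix (Fin 2) (Fin 2) F)) → m.rank ∈ ({0, 1, 2} : Finset ℕ) := by
          intro m _
          have := hrank_le m
          simp only [Finset.mem_insert, Finset.mem_singleton]
          omega
        have hfib := Finset.card_eq_sum_card_fiberwise hmem
        have h0f : ((Finset.univ : Finset (Matrix (Fin 2) (Fin 2) F)).filter
            fun m => m.rank = 0) = {0} := by
          ext m
          simp [stmt4_rank_eq_zero_iff']
        have huniv : (Finset.univ : Finset (Matrix (Fin 2) (Fin 2) F)).card = qn ^ 4 := by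
          rw [Finset.card_univ]
          show Fintype.card (Fin 2 → Fin 2 → F) = qn ^ 4
          rw [Fintype.card_fun, Fintype.card_fun]
          simp [hqn]
          ring
        rw [huniv, show ({0, 1, 2} : Finset ℕ) = insert 0 (insert 1 {2}) from rfl,
          Finset.sum_insert (by decide), Finset.sum_insert (by decide),
          Finset.sum_singleton, h0f, Finset.card_singleton] at hfib
        omega
      have hN2 := stmt4_card_rank2 (F := F)
      calc ∑ m : Matrix (Fin 2) (Fin 2) F, w m
          = ∑ m : Matrix (Fin 2) (Fin 2) F, ((if m.rank = 1 then (qn : ℝ) else 0) +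
            (if m.rank = 2 then ((qn : ℝ) ^ 2 - (qn : ℝ) - 1) / ((qn : ℝ) - 1) else 0)) :=
            Finset.sum_congr rfl fun m _ => hterm m
        _ = (((Finset.univ : Finset (Matrix (Fin 2) (Fin 2) F)).filter
              fun m => m.rank = 1).card : ℝ) * (qn : ℝ)
            + (((Finset.univ : Finset (Matrix (Fin 2) (Fin 2) F)).filter
              fun m => m.rank = 2).card : ℝ) *
              (((qn : ℝ) ^ 2 - (qn : ℝ) - 1) / ((qn : ℝ) - 1)) := by
            rw [Finset.sum_add_distrib]
            rw [← Finset.sum_filter, ← Finset.sum_filter]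
            simp [Finset.sum_const, mul_comm]
        _ = ((qn : ℝ) ^ 2 - 1) / (qn : ℝ) * (qn : ℝ) ^ 4 := by
            have e2 : (((Finset.univ : Finset (Matrix (Fin 2) (Fin 2) F)).filter
                fun m => m.rank = 2).card : ℝ) = ((qn:ℝ)^2 - 1) * ((qn:ℝ)^2 - (qn:ℝ)) := by
              rw [hN2, ← hqn]
              push_cast [Nat.cast_sub (by nlinarith : 1 ≤ qn ^ 2),
                Nat.cast_sub (by nlinarith : qn ≤ qn ^ 2)]
              ring
            have e1 : (((Finset.univ : Finset (Matrix (Fin 2) (Fin 2) F)).filter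
                fun m => m.rank = 1).card : ℝ)
                = (qn:ℝ)^4 - 1 - ((qn:ℝ)^2 - 1) * ((qn:ℝ)^2 - (qn:ℝ)) := by
              have := congrArg (fun n : ℕ => (n : ℝ)) hN1
              push_cast at this
              rw [← e2]
              linarith
            rw [e1, e2]
            field_simp
            ring
end

section
/- Let 𝒜 be a finite Frobenius R-R-bimodule with homogeneous weight w of average value γ, extended additively to 𝒜^n. Let M be an R-submodule of 𝒜^n and x ∈ 𝒜^n. Then ∑_{c ∈ M} w(x + c) = γ·|M|·|supp(M)| + |M|·w(π_{supp(M)}(x)), where supp(M) = { i : ∃ z ∈ M, z_i ≠ 0 } and π_{supp(M)}(x) is x punctured to the coordinates outside supp(M). -/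
/-!
Swap the two sums and work coordinate by coordinate. Off `supp M` every `c ∈ M` vanishes, so the
coordinate contributes `|M| · w(x_i)`. On `supp M` the coordinate map `c ↦ c_i` is a nonzero
`R`-linear map, and so is `c ↦ c_i · u` for each unit `u`; since `χ` is a generating character, its
composite with such a map is a nontrivial character of `M` and sums to zero. Expanding `w` by its
defining formula, only the constant term survives, and the coordinate contributes `γ · |M|`.
-/

open Finset MulOpposite
open scoped Classical BigOperators

section CharacterSums

variable {R A M : Type*} [Ring R] [AddCommGroup A] [Module R A] [AddCommGroup M] [Module R M]
  [Fintype M]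

theorem AddChar.sum_comp_linearMap_eq_zero (χ : AddChar A ℂ)
    (hgen : ∀ N : Submodule R A, (∀ x ∈ N, χ x = 1) → N = ⊥) {f : M →ₗ[R] A} (hf : f ≠ 0) :
    ∑ m, χ (f m) = 0 := by
  refine AddChar.sum_eq_zero_of_ne_one (ψ := χ.compAddMonoidHom f.toAddMonoidHom) fun h ↦ hf ?_
  rw [← LinearMap.range_eq_bot]
  refine hgen _ ?_
  rintro _ ⟨m, rfl⟩
  exact DFunLike.congr_fun h m

theorem sum_homogeneousWeight_add_linearMap [Module Rᵐᵒᵖ A] [SMulCommClass R Rᵐᵒᵖ A]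
    [Fintype Rˣ] (χ : AddChar A ℂ)
    (hgen : ∀ N : Submodule R A, (∀ x ∈ N, χ x = 1) → N = ⊥) (γ : ℝ) (w : A → ℝ)
    (hw : ∀ a : A, (w a : ℂ) =
      (γ : ℂ) * (1 - (Fintype.card Rˣ : ℂ)⁻¹ * ∑ u : Rˣ, χ (op (u : R) • a)))
    {g : M →ₗ[R] A} (hg : g ≠ 0) (a : A) :
    ∑ m, w (a + g m) = γ * Fintype.card M := by
  have := SMulCommClass.symm R Rᵐᵒᵖ A
  obtain ⟨m₀, hm₀⟩ := DFunLike.ne_iff.1 hg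
  have hchar (u : Rˣ) : ∑ m, χ (op (u : R) • (a + g m)) = 0 := by
    have hu : (DistribSMul.toLinearMap R A (op (u : R))).comp g ≠ 0 :=
      DFunLike.ne_iff.2 ⟨m₀, by simpa [u.isUnit.op.smul_eq_zero] using hm₀⟩
    simp only [smul_add, AddChar.map_add_eq_mul, ← Finset.mul_sum]
    rw [← mul_zero (χ (op (u : R) • a)), ← AddChar.sum_comp_linearMap_eq_zero χ hgen hu]
    rfl
  apply Complex.ofReal_injective
  push_cast
  simp only [hw, mul_sub, mul_one, Finset.sum_sub_distrib, ← Finset.mul_sum]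
  rw [Finset.sum_comm, Finset.sum_eq_zero fun u _ ↦ hchar u]
  simp [mul_comm]

end CharacterSums

theorem stmt6_general {R A : Type*} [Ring R] [Fintype R] [DecidableEq R]
    [AddCommGroup A] [Module R A] [Module Rᵐᵒᵖ A] [SMulCommClass R Rᵐᵒᵖ A] [Fintype A]
    (χ : AddChar A ℂ)
    (hgenL : ∀ N : Submodule R A, (∀ x ∈ N, χ x = 1) → N = ⊥)
    (γ : ℝ) (w : A → ℝ)
    (hw : ∀ a : A, (w a : ℂ) =
      (γ : ℂ) * (1 - (Fintype.card Rˣ : ℂ)⁻¹ * ∑ u : Rˣ, χ (op (u : R) • a)))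
    (n : ℕ) (M : Submodule R (Fin n → A)) (x : Fin n → A) :
    ∑ c : M, ∑ i, w (x i + (c : Fin n → A) i) =
      γ * (Nat.card M : ℝ) * ((univ.filter fun i : Fin n => ∃ z ∈ M, z i ≠ 0).card : ℝ) +
        (Nat.card M : ℝ) *
          ∑ i ∈ univ \ (univ.filter fun i : Fin n => ∃ z ∈ M, z i ≠ 0), w (x i) := by
  set S := univ.filter fun i : Fin n => ∃ z ∈ M, z i ≠ 0
  have h_supp (i) (hi : i ∈ S) : ∑ c : M, w (x i + (c : Fin n → A) i) = γ * Nat.card M := by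
    obtain ⟨z, hz, hzi⟩ := (mem_filter.1 hi).2
    rw [Nat.card_eq_fintype_card]
    exact sum_homogeneousWeight_add_linearMap χ hgenL γ w hw
      (g := LinearMap.proj i ∘ₗ M.subtype) (DFunLike.ne_iff.2 ⟨⟨z, hz⟩, hzi⟩) (x i)
  have h_off (i) (hi : i ∈ univ \ S) :
      ∑ c : M, w (x i + (c : Fin n → A) i) = Nat.card M * w (x i) := by
    have hM : ∀ c : M, (c : Fin n → A) i = 0 := by simpa [S] using hi
    simp [hM, Nat.card_eq_fintype_card]
  rw [sum_comm, ← sum_sdiff (subset_univ S), sum_congr rfl h_off, sum_congr rfl h_supp,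
    sum_const, nsmul_eq_mul, ← mul_sum]
  ring

/-- key lemma. For a finite Frobenius `R`-`R`-bimodule `𝒜` with homogeneous
weight `w` of average value `γ` (given via a generating character), an `R`-submodule
`M ≤ 𝒜^n` and `x ∈ 𝒜^n`:
`∑_{c ∈ M} w(x + c) = γ·|M|·|supp M| + |M|·w(π_{supp M}(x))`. -/
theorem stmt6 {R A : Type*} [Ring R] [Fintype R] [DecidableEq R]
    [AddCommGroup A] [Module R A] [Module Rᵐᵒᵖ A] [SMulCommClass R Rᵐᵒᵖ A] [Fintype A]
    (χ : AddChar A ℂ)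
    (hgenL : ∀ N : Submodule R A, (∀ x ∈ N, χ x = 1) → N = ⊥)
    (hgenR : ∀ N : Submodule Rᵐᵒᵖ A, (∀ x ∈ N, χ x = 1) → N = ⊥)
    (hcard : Fintype.card A = Fintype.card R)
    (γ : ℝ) (w : A → ℝ)
    (hw : ∀ a : A, (w a : ℂ) =
      (γ : ℂ) * (1 - (Fintype.card Rˣ : ℂ)⁻¹ * ∑ u : Rˣ, χ (op (u : R) • a)))
    (n : ℕ) (M : Submodule R (Fin n → A)) (x : Fin n → A) :
    ∑ c : M, ∑ i, w (x i + (c : Fin n → A) i) =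
      γ * (Nat.card M : ℝ) * ((univ.filter fun i : Fin n => ∃ z ∈ M, z i ≠ 0).card : ℝ) +
        (Nat.card M : ℝ) *
          ∑ i ∈ univ \ (univ.filter fun i : Fin n => ∃ z ∈ M, z i ≠ 0), w (x i) :=
  stmt6_general χ hgenL γ w hw n M x
end

section
/- Let K ≤ 𝔽_q^n be a subspace with support of size ℓ, M a union of cosets of K with full support size s = n, C = M/K ⊆ 𝔽_q^n/K with induced minimum Hamming distance d. If d > ((q−1)/q)·s, then |C| ≤ (d − ((q−1)/q)ℓ)/(d − ((q−1)/q)s). -/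
open Finset
open scoped Classical BigOperators

/-- Plotkin bound in the finite-field/Hamming case. `K ≤ 𝔽_q^n` has
support of size `ℓ`, `M` is a union of cosets of `K` with full support, `C = M/K` has
induced minimum Hamming distance `d`. If `d > ((q-1)/q)·n` then
`|C| ≤ (d − ((q-1)/q)ℓ)/(d − ((q-1)/q)n)`. -/
theorem stmt10 {F : Type*} [Field F] [Fintype F] [DecidableEq F]
    (n ℓ : ℕ) (K : Submodule F (Fin n → F))
    (hℓ : (univ.filter fun i : Fin n => ∃ z ∈ K, z i ≠ 0).card = ℓ)
    (M : Finset (Fin n → F)) (hMne : M.Nonempty)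
    (hMK : ∀ x ∈ M, ∀ k ∈ K, x + k ∈ M)
    (hfull : ∀ i : Fin n, ∃ z ∈ M, z i ≠ 0)
    (C : Finset ((Fin n → F) ⧸ K))
    (hC : C = M.image (fun x => (Submodule.Quotient.mk x : (Fin n → F) ⧸ K)))
    (d : ℝ)
    (hd_le : ∀ u ∈ M, ∀ v ∈ M, u - v ∉ K → d ≤ (hammingNorm (u - v) : ℝ))
    (hd_ex : ∃ u ∈ M, ∃ v ∈ M, u - v ∉ K ∧ d = (hammingNorm (u - v) : ℝ))
    (hd : ((Fintype.card F - 1 : ℝ) / (Fintype.card F : ℝ)) * n < d) :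
    (C.card : ℝ) ≤
      (d - ((Fintype.card F - 1 : ℝ) / (Fintype.card F : ℝ)) * ℓ) /
        (d - ((Fintype.card F - 1 : ℝ) / (Fintype.card F : ℝ)) * n) := by
  classical
  have hq1 : 1 ≤ Fintype.card F := Fintype.card_pos
  set q : ℕ := Fintype.card F with hqdef
  set Kf : Finset (Fin n → F) := Set.toFinset (K : Set (Fin n → F)) with hKfdef
  have hmemKf : ∀ z : Fin n → F, z ∈ Kf ↔ z ∈ K := fun z => Set.mem_toFinset
  set k := Kf.card with hkdef
  have hkpos : 0 < k := Finset.card_pos.mpr ⟨0, (hmemKf 0).mpr K.zero_mem⟩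
  -- cosets inside M
  have hcoset : ∀ u ∈ M, M.filter (fun v => u - v ∈ K) = Kf.image (fun z => u - z) := by
    intro u hu
    ext v
    simp only [mem_filter, mem_image, hmemKf]
    constructor
    · rintro ⟨_, hz⟩
      exact ⟨u - v, hz, by ring⟩
    · rintro ⟨z, hz, rfl⟩
      refine ⟨?_, by simpa using hz⟩
      have := hMK u hu (-z) (K.neg_mem hz)
      simpa [sub_eq_add_neg] using this
  have hinj : ∀ u : Fin n → F, Function.Injective (fun z : Fin n → F => u - z) := by
    intro u a b hab
    have : u - a = u - b := hab
    have := congrArg (fun w => u - w) this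
    simpa using this
  have hcosetcard : ∀ u ∈ M, (M.filter (fun v => u - v ∈ K)).card = k := by
    intro u hu
    rw [hcoset u hu, Finset.card_image_of_injective _ (hinj u)]
  have hkleM : k ≤ M.card := by
    obtain ⟨x, hx⟩ := hMne
    rw [← hcosetcard x hx]
    exact Finset.card_filter_le _ _
  -- |M| = |C| * k
  have hMcard : M.card = C.card * k := by
    rw [hC]
    rw [Finset.card_eq_sum_card_image (fun x => (Submodule.Quotient.mk x : (Fin n → F) ⧸ K)) M]
    rw [Finset.sum_congr rfl (fun b hb => ?_), Finset.sum_const, smul_eq_mul]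
    obtain ⟨x, hx, rfl⟩ := Finset.mem_image.mp hb
    rw [← hcosetcard x hx]
    congr 1
    apply Finset.filter_congr
    intro v _
    rw [Submodule.Quotient.eq]
    constructor
    · intro h; simpa [neg_sub] using K.neg_mem h
    · intro h; simpa [neg_sub] using K.neg_mem h
  -- coordinate fibers of K are equidistributed on the support
  have hfiber : ∀ i : Fin n, (∃ z ∈ K, z i ≠ 0) → ∀ a : F,
      (Kf.filter fun z => z i = a).card = (Kf.filter fun z => z i = 0).card := by
    rintro i ⟨z0, hz0K, hz0⟩ a
    set w : Fin n → F := (a * (z0 i)⁻¹) • z0 with hw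
    have hwK : w ∈ K := K.smul_mem _ hz0K
    have hwi : w i = a := by
      simp only [hw, Pi.smul_apply, smul_eq_mul]
      field_simp
    have himg : Kf.filter (fun z => z i = a)
        = (Kf.filter fun z => z i = 0).image (fun z => z + w) := by
      ext z
      simp only [mem_filter, mem_image, hmemKf]
      constructor
      · rintro ⟨hzK, hza⟩
        refine ⟨z - w, ⟨K.sub_mem hzK hwK, ?_⟩, by ring⟩
        simp [Pi.sub_apply, hza, hwi]
      · rintro ⟨y, ⟨hyK, hy0⟩, rfl⟩
        exact ⟨K.add_mem hyK hwK, by simp [Pi.add_apply, hy0, hwi]⟩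
    rw [himg, Finset.card_image_of_injective _ (add_left_injective w)]
  have hqc : ∀ i : Fin n, (∃ z ∈ K, z i ≠ 0) →
      q * (Kf.filter fun z => z i = 0).card = k := by
    intro i hi
    have h1 : k = ∑ a : F, (Kf.filter fun z => z i = a).card :=
      Finset.card_eq_sum_card_fiberwise (fun x _ => Finset.mem_univ (x i))
    rw [h1, Finset.sum_congr rfl (fun a _ => hfiber i hi a), Finset.sum_const,
      smul_eq_mul, Finset.card_univ]
  -- total weight of K
  set W := ∑ z ∈ Kf, hammingNorm z with hWdef
  clear_value W
  have hW : q * W = ℓ * ((q - 1) * k) := by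
    have hswap : W = ∑ i : Fin n, (Kf.filter fun z => z i ≠ 0).card := by
      rw [hWdef]
      simp only [hammingNorm, Finset.card_filter]
      rw [Finset.sum_comm]
    rw [hswap, Finset.mul_sum]
    rw [← Finset.sum_filter_add_sum_filter_not Finset.univ
      (fun i : Fin n => ∃ z ∈ K, z i ≠ 0)]
    have hzero : ∀ i ∈ Finset.univ.filter (fun i : Fin n => ¬ ∃ z ∈ K, z i ≠ 0),
        q * (Kf.filter fun z => z i ≠ 0).card = 0 := by
      intro i hi
      rw [Finset.mem_filter] at hi
      push_neg at hi
      have : Kf.filter (fun z => z i ≠ 0) = ∅ := by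
        apply Finset.filter_eq_empty_iff.mpr
        intro z hz
        simpa using hi.2 z ((hmemKf z).mp hz)
      simp [this]
    have hpos : ∀ i ∈ Finset.univ.filter (fun i : Fin n => ∃ z ∈ K, z i ≠ 0),
        q * (Kf.filter fun z => z i ≠ 0).card = (q - 1) * k := by
      intro i hi
      rw [Finset.mem_filter] at hi
      have hsplit := Finset.card_filter_add_card_filter_not
        (s := Kf) (p := fun z => z i = 0)
      have hc := hqc i hi.2
      -- q * (k - c) = (q-1) * k  with q * c = k
      have h2 : q * (Kf.filter fun z => ¬ z i = 0).card + k = q * k := by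
        conv_lhs => rw [← hc]
        rw [← Nat.mul_add, Nat.add_comm, hsplit, ← hkdef]
      have h4 : (q - 1) * k = q * k - k := Nat.sub_one_mul q k
      simp only [ne_eq]
      rw [h4]
      exact eq_tsub_of_add_eq h2
    rw [Finset.sum_congr rfl hpos, Finset.sum_congr rfl hzero,
      Finset.sum_const, Finset.sum_const, hℓ, smul_eq_mul, smul_eq_mul]
    simp
  -- the three sums
  set Stot := ∑ u ∈ M, ∑ v ∈ M, hammingDist u v with hStot
  set Ssame := ∑ u ∈ M, ∑ v ∈ M, (if u - v ∈ K then hammingDist u v else 0) with hSsame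
  set Sdiff := ∑ u ∈ M, ∑ v ∈ M, (if u - v ∈ K then 0 else hammingDist u v) with hSdiff
  clear_value Stot Ssame Sdiff
  have hsplitS : Stot = Ssame + Sdiff := by
    rw [hStot, hSsame, hSdiff, ← Finset.sum_add_distrib]
    refine Finset.sum_congr rfl fun u _ => ?_
    rw [← Finset.sum_add_distrib]
    refine Finset.sum_congr rfl fun v _ => ?_
    split <;> simp
  -- same-coset sum
  have hSsameval : Ssame = M.card * W := by
    rw [hSsame]
    rw [Finset.sum_congr rfl (fun u hu => ?_), Finset.sum_const, smul_eq_mul]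
    rw [← Finset.sum_filter, hcoset u hu, Finset.sum_image
      (fun a _ b _ hab => hinj u hab), hWdef]
    refine Finset.sum_congr rfl fun z _ => ?_
    rw [hammingDist_comm, hammingDist_eq_hammingNorm]
    congr 1
    ring
  -- per-coordinate upper bound
  have hPi : ∀ i : Fin n, (q : ℝ) * (((M ×ˢ M).filter fun p => p.1 i ≠ p.2 i).card : ℝ)
      ≤ ((q : ℝ) - 1) * (M.card : ℝ) ^ 2 := by
    intro i
    have hPE : ((M ×ˢ M).filter fun p => p.1 i = p.2 i).card
        + ((M ×ˢ M).filter fun p => ¬ p.1 i = p.2 i).card = M.card * M.card := by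
      rw [Finset.card_filter_add_card_filter_not, Finset.card_product]
    have hE : ((M ×ˢ M).filter fun p => p.1 i = p.2 i).card
        = ∑ a : F, ((M.filter fun u => u i = a).card) ^ 2 := by
      rw [Finset.card_eq_sum_card_fiberwise
        (f := fun p : (Fin n → F) × (Fin n → F) => p.1 i) (t := Finset.univ)
        (fun x _ => Finset.mem_univ _)]
      refine Finset.sum_congr rfl fun a _ => ?_
      rw [Finset.filter_filter]
      have : ((M ×ˢ M).filter fun p => p.1 i = p.2 i ∧ p.1 i = a)
          = (M.filter fun u => u i = a) ×ˢ (M.filter fun v => v i = a) := by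
        ext ⟨u, v⟩
        simp only [Finset.mem_filter, Finset.mem_product]
        constructor
        · rintro ⟨⟨hu, hv⟩, he, ha⟩
          exact ⟨⟨hu, ha⟩, hv, ha ▸ he.symm⟩
        · rintro ⟨⟨hu, ha⟩, hv, hb⟩
          exact ⟨⟨hu, hv⟩, ha.trans hb.symm, ha⟩
      rw [this, Finset.card_product, sq]
    have hN : ∑ a : F, ((M.filter fun u => u i = a).card) = M.card :=
      (Finset.card_eq_sum_card_fiberwise (fun x _ => Finset.mem_univ (x i))).symm
    have hCS : (M.card : ℝ) ^ 2
        ≤ (q : ℝ) * (((M ×ˢ M).filter fun p => p.1 i = p.2 i).card : ℝ) := by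
      calc (M.card : ℝ) ^ 2
            = ((∑ a : F, (M.filter fun u => u i = a).card : ℕ) : ℝ) ^ 2 := by rw [hN]
          _ ≤ (Finset.univ : Finset F).card * ∑ a : F,
              ((M.filter fun u => u i = a).card : ℝ) ^ 2 := by
              push_cast
              exact sq_sum_le_card_mul_sum_sq
          _ = (q : ℝ) * (((M ×ˢ M).filter fun p => p.1 i = p.2 i).card : ℝ) := by
              rw [hE, Finset.card_univ]
              push_cast
              ring
    have hPE' : (((M ×ˢ M).filter fun p => p.1 i = p.2 i).card : ℝ)
        + (((M ×ˢ M).filter fun p => ¬ p.1 i = p.2 i).card : ℝ) = (M.card : ℝ) ^ 2 := by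
      rw [sq]
      exact_mod_cast congrArg (Nat.cast : ℕ → ℝ) hPE
    have : (((M ×ˢ M).filter fun p => p.1 i ≠ p.2 i).card : ℝ)
        = (((M ×ˢ M).filter fun p => ¬ p.1 i = p.2 i).card : ℝ) := by norm_num
    rw [this]
    have hq0 : (1 : ℝ) ≤ (q : ℝ) := by exact_mod_cast hq1
    have hnn : (0 : ℝ) ≤ (((M ×ˢ M).filter fun p => p.1 i = p.2 i).card : ℝ) :=
      Nat.cast_nonneg _
    nlinarith [hCS, hPE', hnn]
  -- total upper bound
  have htot : Stot = ∑ i : Fin n, ((M ×ˢ M).filter fun p => p.1 i ≠ p.2 i).card := by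
    rw [hStot, ← Finset.sum_product']
    simp only [hammingDist, Finset.card_filter]
    rw [Finset.sum_comm]
  have hup : (q : ℝ) * (Stot : ℝ) ≤ (n : ℝ) * (((q : ℝ) - 1) * (M.card : ℝ) ^ 2) := by
    rw [htot]
    push_cast
    rw [Finset.mul_sum]
    refine le_trans (Finset.sum_le_sum fun i _ => hPi i) ?_
    rw [Finset.sum_const, Finset.card_univ, Fintype.card_fin, nsmul_eq_mul]
  -- lower bound for the different-coset sum
  set pd := ∑ u ∈ M, (M.filter fun v => u - v ∉ K).card with hpddef
  clear_value pd
  have hpdval : pd = M.card * (M.card - k) := by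
    rw [hpddef]
    rw [Finset.sum_congr rfl (fun u hu => ?_), Finset.sum_const, smul_eq_mul]
    have hsp := Finset.card_filter_add_card_filter_not
      (s := M) (p := fun v => u - v ∈ K)
    rw [hcosetcard u hu, Nat.add_comm] at hsp
    exact eq_tsub_of_add_eq hsp
  have hlow : (pd : ℝ) * d ≤ (Sdiff : ℝ) := by
    have h1 : ∀ u ∈ M, ((M.filter fun v => u - v ∉ K).card : ℝ) * d
        ≤ ∑ v ∈ M.filter (fun v => u - v ∉ K), (hammingDist u v : ℝ) := by
      intro u hu
      have h2 := Finset.card_nsmul_le_sum (M.filter fun v => u - v ∉ K)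
        (fun v => (hammingDist u v : ℝ)) d ?_
      · simpa [nsmul_eq_mul] using h2
      · intro v hv
        rw [Finset.mem_filter] at hv
        have := hd_le u hu v hv.1 hv.2
        rwa [hammingDist_comm, hammingDist_eq_hammingNorm, neg_add_eq_sub]
    calc (pd : ℝ) * d = ∑ u ∈ M, ((M.filter fun v => u - v ∉ K).card : ℝ) * d := by
          rw [hpddef]; push_cast; rw [Finset.sum_mul]
      _ ≤ ∑ u ∈ M, ∑ v ∈ M.filter (fun v => u - v ∉ K), (hammingDist u v : ℝ) :=
          Finset.sum_le_sum h1
      _ = (Sdiff : ℝ) := by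
          rw [hSdiff]
          push_cast
          refine Finset.sum_congr rfl fun u _ => ?_
          rw [Finset.sum_filter]
          refine Finset.sum_congr rfl fun v _ => ?_
          by_cases h : u - v ∈ K <;> simp [h]
  -- assemble
  have hCne : C.Nonempty := by
    rw [hC]; exact hMne.image _
  have hm1 : 1 ≤ C.card := Finset.card_pos.mpr hCne
  have hqR : (0 : ℝ) < (q : ℝ) := by exact_mod_cast hq1
  have hkR : (0 : ℝ) < (k : ℝ) := by exact_mod_cast hkpos
  have hmR : (1 : ℝ) ≤ (C.card : ℝ) := by exact_mod_cast hm1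
  have hSsameR : (q : ℝ) * (Ssame : ℝ)
      = (M.card : ℝ) * ((ℓ : ℝ) * (((q : ℝ) - 1) * (k : ℝ))) := by
    have h1 : q * Ssame = M.card * (ℓ * ((q - 1) * k)) := by
      rw [hSsameval, ← hW]; ring
    have h2 := congrArg (Nat.cast : ℕ → ℝ) h1
    push_cast [Nat.cast_sub hq1] at h2
    linarith [h2]
  have hsplitR : (Stot : ℝ) = (Ssame : ℝ) + (Sdiff : ℝ) := by
    exact_mod_cast congrArg (Nat.cast : ℕ → ℝ) hsplitS
  have step1 : (q : ℝ) * ((pd : ℝ) * d)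
      ≤ (n : ℝ) * (((q : ℝ) - 1) * (M.card : ℝ) ^ 2)
        - (M.card : ℝ) * ((ℓ : ℝ) * (((q : ℝ) - 1) * (k : ℝ))) := by
    have h1 : (q : ℝ) * ((pd : ℝ) * d) ≤ (q : ℝ) * (Sdiff : ℝ) :=
      mul_le_mul_of_nonneg_left hlow (le_of_lt hqR)
    have h2 : (q : ℝ) * (Sdiff : ℝ) = (q : ℝ) * (Stot : ℝ) - (q : ℝ) * (Ssame : ℝ) := by
      rw [hsplitR]; ring
    linarith [hup, h1, h2, hSsameR]
  have hpdR : (pd : ℝ) = (M.card : ℝ) * ((M.card : ℝ) - (k : ℝ)) := by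
    rw [hpdval, Nat.cast_mul, Nat.cast_sub hkleM]
  have hMR : (M.card : ℝ) = (C.card : ℝ) * (k : ℝ) := by exact_mod_cast hMcard
  set m : ℝ := (C.card : ℝ) with hmdef
  rw [hpdR, hMR] at step1
  have hk2 : (0 : ℝ) < (k : ℝ) ^ 2 := pow_pos hkR 2
  have step2 : (k : ℝ) ^ 2 * ((q : ℝ) * (m * (m - 1)) * d)
      ≤ (k : ℝ) ^ 2 * (((q : ℝ) - 1) * ((n : ℝ) * m ^ 2 - m * (ℓ : ℝ))) := by
    ring_nf at step1 ⊢
    linarith [step1]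
  have key : (q : ℝ) * (m * (m - 1)) * d
      ≤ ((q : ℝ) - 1) * ((n : ℝ) * m ^ 2 - m * (ℓ : ℝ)) :=
    (mul_le_mul_iff_right₀ hk2).mp step2
  have hmpos : (0 : ℝ) < m := by linarith
  have step3 : m * ((q : ℝ) * (m - 1) * d)
      ≤ m * (((q : ℝ) - 1) * ((n : ℝ) * m - (ℓ : ℝ))) := by
    ring_nf at key ⊢
    linarith [key]
  have key2 : (q : ℝ) * (m - 1) * d ≤ ((q : ℝ) - 1) * ((n : ℝ) * m - (ℓ : ℝ)) :=
    (mul_le_mul_iff_right₀ hmpos).mp step3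
  have hden : 0 < d - ((q : ℝ) - 1) / (q : ℝ) * (n : ℝ) := by linarith [hd]
  rw [le_div_iff₀ hden]
  have hqne : (q : ℝ) ≠ 0 := ne_of_gt hqR
  have h3 : (q : ℝ) * (m * (d - ((q : ℝ) - 1) / (q : ℝ) * (n : ℝ)))
      ≤ (q : ℝ) * (d - ((q : ℝ) - 1) / (q : ℝ) * (ℓ : ℝ)) := by
    have e1 : (q : ℝ) * (m * (d - ((q : ℝ) - 1) / (q : ℝ) * (n : ℝ)))
        = (q : ℝ) * m * d - ((q : ℝ) - 1) * (n : ℝ) * m := by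
      field_simp
    have e2 : (q : ℝ) * (d - ((q : ℝ) - 1) / (q : ℝ) * (ℓ : ℝ))
        = (q : ℝ) * d - ((q : ℝ) - 1) * (ℓ : ℝ) := by
      field_simp
    rw [e1, e2]
    ring_nf at key2 ⊢
    linarith [key2]
  exact le_of_mul_le_mul_left h3 hqR
end

section
/- With 𝒜, K ≤ 𝒜^s, ℓ = |supp(K)|, γ as above and r ≥ γℓ: |B̂^av(r)| = |B^{s−ℓ}(r − γℓ)| · |𝒜|^ℓ / |K|, where B^k(ρ) = { z ∈ 𝒜^k : w(z) ≤ ρ } is the homogeneous-weight ball of radius ρ in 𝒜^k and B̂^av(r) is the set of cosets of K in 𝒜^s whose average homogeneous weight is at most r. -/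
open Finset MulOpposite
open scoped Classical BigOperators

/-! Let `S` be the support of `K`. For `i ∈ S` the coordinate projection of `K` is a nonzero
`R`-linear map, so each map `k ↦ u • k i` (`u` a unit) has nonzero range; as `χ` is generating,
the character sums `∑ₖ χ (u • k i)` vanish and the homogeneous weight averages to `γ` along `K`.
Off `S` every element of `K` vanishes. Hence the average weight of the coset `z + K` is
`γ ℓ + ∑_{i ∉ S} w (z i)`, so the cosets in question are exactly the images of the vectors `z`
with `∑_{i ∉ S} w (z i) ≤ r - γ ℓ`. There are `|K|` such vectors per coset, and they form the
product of a ball in `𝒜^{s-ℓ}` with the free factor `𝒜^ℓ`. -/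

theorem AddChar.sum_apply_linearMap_eq_zero {R A M : Type*} [Ring R] [AddCommGroup A]
    [Module R A] [AddCommGroup M] [Module R M] [Fintype M] (χ : AddChar A ℂ)
    (hχ : ∀ N : Submodule R A, (∀ x ∈ N, χ x = 1) → N = ⊥) {g : M →ₗ[R] A} (hg : g ≠ 0) :
    ∑ m, χ (g m) = 0 := by
  refine (AddChar.sum_eq_zero_iff_ne_zero (ψ := χ.compAddMonoidHom g.toAddMonoidHom)).2
    fun h => hg <| LinearMap.range_eq_bot.1 <| hχ _ ?_
  rintro _ ⟨m, rfl⟩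
  exact DFunLike.congr_fun h m

theorem sum_weight_add_linearMap {R A M : Type*} [Ring R] [Fintype R] [DecidableEq R]
    [AddCommGroup A] [Module R A] [Module Rᵐᵒᵖ A] [SMulCommClass R Rᵐᵒᵖ A]
    [AddCommGroup M] [Module R M] [Fintype M] (χ : AddChar A ℂ)
    (hχ : ∀ N : Submodule R A, (∀ x ∈ N, χ x = 1) → N = ⊥) (γ : ℝ) (w : A → ℝ)
    (hw : ∀ a : A, (w a : ℂ) =
      (γ : ℂ) * (1 - (Fintype.card Rˣ : ℂ)⁻¹ * ∑ u : Rˣ, χ (op (u : R) • a)))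
    {g : M →ₗ[R] A} (hg : g ≠ 0) (a : A) :
    ∑ m, w (a + g m) = Fintype.card M * γ := by
  have hvanish : ∀ u : Rˣ, ∑ m, χ (op (u : R) • g m) = 0 := fun u =>
    AddChar.sum_apply_linearMap_eq_zero χ hχ (g := op (u : R) • g) fun h =>
      hg <| LinearMap.ext fun m => by
        simpa [(u.isUnit.op : IsUnit (op (u : R))).smul_eq_zero] using LinearMap.congr_fun h m
  apply Complex.ofReal_injective
  push_cast
  simp_rw [hw, smul_add, AddChar.map_add_eq_mul, mul_sub, mul_one, Finset.sum_sub_distrib,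
    ← Finset.mul_sum]
  rw [Finset.sum_comm]
  simp_rw [← Finset.mul_sum, hvanish]
  simp

noncomputable def Submodule.coordSupport {R A ι : Type*} [Semiring R] [AddCommMonoid A]
    [Module R A] [Fintype ι] (K : Submodule R (ι → A)) : Finset ι :=
  univ.filter fun i => ∃ z ∈ K, z i ≠ 0

namespace Submodule

variable {R A ι : Type*} [Semiring R] [AddCommMonoid A] [Module R A] [Fintype ι]
  {K : Submodule R (ι → A)} {i : ι}

theorem apply_eq_zero_of_notMem_coordSupport (hi : i ∉ K.coordSupport) {z : ι → A}
    (hz : z ∈ K) : z i = 0 := by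
  by_contra h
  exact hi (mem_filter.2 ⟨mem_univ i, z, hz, h⟩)

theorem proj_comp_subtype_ne_zero (hi : i ∈ K.coordSupport) :
    LinearMap.proj i ∘ₗ K.subtype ≠ 0 := by
  obtain ⟨z, hz, hzi⟩ := (mem_filter.1 hi).2
  exact fun h => hzi (LinearMap.congr_fun h ⟨z, hz⟩)

theorem sum_compl_coordSupport_add_mem [DecidableEq ι] (f : A → ℝ) (z : ι → A) {k : ι → A}
    (hk : k ∈ K) :
    ∑ i ∈ K.coordSupportᶜ, f ((z + k) i) = ∑ i ∈ K.coordSupportᶜ, f (z i) :=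
  Finset.sum_congr rfl fun i hi => by
    simp [apply_eq_zero_of_notMem_coordSupport (Finset.mem_compl.1 hi) hk]

end Submodule

theorem sum_weight_coset_eq {R A ι : Type*} [Ring R] [Fintype R] [DecidableEq R]
    [AddCommGroup A] [Module R A] [Module Rᵐᵒᵖ A] [SMulCommClass R Rᵐᵒᵖ A] [Fintype A]
    [Fintype ι] [DecidableEq ι] (χ : AddChar A ℂ)
    (hχ : ∀ N : Submodule R A, (∀ x ∈ N, χ x = 1) → N = ⊥) (γ : ℝ) (w : A → ℝ)
    (hw : ∀ a : A, (w a : ℂ) =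
      (γ : ℂ) * (1 - (Fintype.card Rˣ : ℂ)⁻¹ * ∑ u : Rˣ, χ (op (u : R) • a)))
    (K : Submodule R (ι → A)) (z : ι → A) :
    ∑ k : K, ∑ i, w (z i + (k : ι → A) i) =
      Nat.card K * (∑ i ∈ K.coordSupportᶜ, w (z i) + γ * #K.coordSupport) := by
  rw [Finset.sum_comm, ← Finset.sum_add_sum_compl K.coordSupport, mul_add, add_comm]
  congr 1
  · rw [Finset.mul_sum]
    refine Finset.sum_congr rfl fun i hi => ?_
    simp [K.apply_eq_zero_of_notMem_coordSupport (Finset.mem_compl.1 hi)]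
  · have hsupp : ∀ i ∈ K.coordSupport, ∑ k : K, w (z i + (k : ι → A) i) = Nat.card K * γ :=
      fun i hi => by
        rw [Nat.card_eq_fintype_card]
        exact sum_weight_add_linearMap χ hχ γ w hw (K.proj_comp_subtype_ne_zero hi) (z i)
    rw [Finset.sum_congr rfl hsupp, Finset.sum_const, nsmul_eq_mul]
    ring

theorem natCard_quotient_mul_natCard {R M : Type*} [Ring R] [AddCommGroup M] [Module R M]
    (K : Submodule R M) {P : M → Prop} (hP : ∀ z, ∀ k ∈ K, P (z + k) ↔ P z) :
    Nat.card {q : M ⧸ K // ∃ z, (Submodule.Quotient.mk z : M ⧸ K) = q ∧ P z} * Nat.card K =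
      Nat.card {z // P z} := by
  set t : Set (M ⧸ K.toAddSubgroup) := {q | ∃ z, (Submodule.Quotient.mk z : M ⧸ K) = q ∧ P z}
  have hpre : QuotientAddGroup.mk ⁻¹' t = {z | P z} := by
    ext z
    refine ⟨fun ⟨y, hyz, hy⟩ => ?_, fun hz => ⟨z, rfl, hz⟩⟩
    have hmem : -y + z ∈ K := QuotientAddGroup.eq.1 hyz
    simpa using (hP y _ hmem).2 hy
  rw [mul_comm, ← Nat.card_prod]
  exact Nat.card_congr ((QuotientAddGroup.preimageMkEquivAddSubgroupProdSet _ t).symm.trans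
    (Equiv.setCongr hpre))

theorem natCard_sum_le_congr {ι κ A : Type*} [Fintype ι] [Fintype κ] (e : ι ≃ κ) (f : A → ℝ)
    (ρ : ℝ) :
    Nat.card {v : ι → A // ∑ i, f (v i) ≤ ρ} = Nat.card {v : κ → A // ∑ i, f (v i) ≤ ρ} :=
  Nat.card_congr <| (e.arrowCongr (Equiv.refl A)).subtypeEquiv fun v => by
    rw [← e.sum_comp]
    simp [Equiv.arrowCongr_apply]

theorem natCard_sum_compl_le {ι A : Type*} [Fintype ι] [DecidableEq ι] [Fintype A]
    (S : Finset ι) (f : A → ℝ) (ρ : ℝ) :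
    Nat.card {z : ι → A // ∑ i ∈ Sᶜ, f (z i) ≤ ρ} =
      Nat.card {v : Fin (Fintype.card ι - #S) → A // ∑ i, f (v i) ≤ ρ} *
        Fintype.card A ^ #S := by
  have hsplit : {z : ι → A // ∑ i ∈ Sᶜ, f (z i) ≤ ρ} ≃
      {v : {i // i ∉ S} → A // ∑ i, f (v i) ≤ ρ} × (S → A) :=
    ((Equiv.piEquivPiSubtypeProd (· ∈ S) fun _ => A).trans (Equiv.prodComm _ _)).subtypeEquiv
      (q := fun p => ∑ i, f (p.1 i) ≤ ρ)
      (fun z => by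
        rw [Finset.sum_subtype Sᶜ (p := (· ∉ S)) (fun _ => Finset.mem_compl)]
        rfl) |>.trans (Equiv.prodSubtypeFstEquivSubtypeProd (β := S → A)
          (p := fun v : {i // i ∉ S} → A => ∑ i, f (v i) ≤ ρ))
  have hcompl : Fintype.card {i // i ∉ S} = Fintype.card ι - #S := by
    rw [Fintype.card_subtype_compl, Fintype.card_coe]
  rw [Nat.card_congr hsplit, Nat.card_prod,
    natCard_sum_le_congr (Fintype.equivFinOfCardEq hcompl),
    Nat.card_eq_fintype_card (α := S → A), Fintype.card_fun, Fintype.card_coe]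

theorem stmt13_general {R A : Type*} [Ring R] [Fintype R] [DecidableEq R]
    [AddCommGroup A] [Module R A] [Module Rᵐᵒᵖ A] [SMulCommClass R Rᵐᵒᵖ A] [Fintype A]
    (χ : AddChar A ℂ)
    (hgenL : ∀ N : Submodule R A, (∀ x ∈ N, χ x = 1) → N = ⊥)
    (γ : ℝ) (w : A → ℝ)
    (hw : ∀ a : A, (w a : ℂ) =
      (γ : ℂ) * (1 - (Fintype.card Rˣ : ℂ)⁻¹ * ∑ u : Rˣ, χ (op (u : R) • a)))
    (s ℓ : ℕ) (K : Submodule R (Fin s → A))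
    (hℓ : (univ.filter fun i : Fin s => ∃ z ∈ K, z i ≠ 0).card = ℓ)
    (r : ℝ) :
    (Nat.card {q : (Fin s → A) ⧸ K //
        ∃ z : Fin s → A, (Submodule.Quotient.mk z : (Fin s → A) ⧸ K) = q ∧
          (Nat.card K : ℝ)⁻¹ * ∑ k : K, ∑ i, w (z i + (k : Fin s → A) i) ≤ r} : ℝ) =
      (Nat.card {z : Fin (s - ℓ) → A // ∑ i, w (z i) ≤ r - γ * ℓ} : ℝ) *
        (Fintype.card A : ℝ) ^ ℓ / (Nat.card K : ℝ) := by
  replace hℓ : #K.coordSupport = ℓ := by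
    convert hℓ using 2
    ext i
    simp [Submodule.coordSupport]
  have hK : (0 : ℝ) < Nat.card K := by exact_mod_cast Nat.card_pos
  have hcoset : ∀ z : Fin s → A,
      (Nat.card K : ℝ)⁻¹ * ∑ k : K, ∑ i, w (z i + (k : Fin s → A) i) ≤ r ↔
        ∑ i ∈ K.coordSupportᶜ, w (z i) ≤ r - γ * ℓ := fun z => by
    rw [sum_weight_coset_eq χ hgenL γ w hw, inv_mul_cancel_left₀ hK.ne', hℓ, le_sub_iff_add_le]
  have hcount := natCard_quotient_mul_natCard K
    (P := fun z => ∑ i ∈ K.coordSupportᶜ, w (z i) ≤ r - γ * ℓ)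
    (fun z k hk => by simp only [Submodule.sum_compl_coordSupport_add_mem w z hk])
  rw [natCard_sum_compl_le, Fintype.card_fin, hℓ] at hcount
  simp_rw [hcoset]
  rw [eq_div_iff hK.ne']
  exact_mod_cast hcount

/-- for `r ≥ γℓ`,
`|B̂^av(r)| = |B^{s−ℓ}(r − γℓ)|·|𝒜|^ℓ/|K|`, where `B̂^av(r)` is the set of cosets of
`K` in `𝒜^s` of average homogeneous weight at most `r` and `B^k(ρ)` is the
homogeneous-weight ball of radius `ρ` in `𝒜^k`. -/
theorem stmt13 {R A : Type*} [Ring R] [Fintype R] [DecidableEq R]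
    [AddCommGroup A] [Module R A] [Module Rᵐᵒᵖ A] [SMulCommClass R Rᵐᵒᵖ A] [Fintype A]
    (χ : AddChar A ℂ)
    (hgenL : ∀ N : Submodule R A, (∀ x ∈ N, χ x = 1) → N = ⊥)
    (hgenR : ∀ N : Submodule Rᵐᵒᵖ A, (∀ x ∈ N, χ x = 1) → N = ⊥)
    (hcard : Fintype.card A = Fintype.card R)
    (γ : ℝ) (w : A → ℝ)
    (hw : ∀ a : A, (w a : ℂ) =
      (γ : ℂ) * (1 - (Fintype.card Rˣ : ℂ)⁻¹ * ∑ u : Rˣ, χ (op (u : R) • a)))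
    (s ℓ : ℕ) (K : Submodule R (Fin s → A))
    (hKright : ∀ (r : R), ∀ z ∈ K, (op r • z : Fin s → A) ∈ K)
    (hℓ : (univ.filter fun i : Fin s => ∃ z ∈ K, z i ≠ 0).card = ℓ)
    (hls : ℓ ≤ s) (r : ℝ) (hr : γ * ℓ ≤ r) :
    (Nat.card {q : (Fin s → A) ⧸ K //
        ∃ z : Fin s → A, (Submodule.Quotient.mk z : (Fin s → A) ⧸ K) = q ∧
          (Nat.card K : ℝ)⁻¹ * ∑ k : K, ∑ i, w (z i + (k : Fin s → A) i) ≤ r} : ℝ) =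
      (Nat.card {z : Fin (s - ℓ) → A // ∑ i, w (z i) ≤ r - γ * ℓ} : ℝ) *
        (Fintype.card A : ℝ) ^ ℓ / (Nat.card K : ℝ) :=
  stmt13_general χ hgenL γ w hw s ℓ K hℓ r
end

section
/- Let C(r) ⊆ 𝒜^s/K be a set of cosets each of average homogeneous weight at most r ≤ γs, with r ≥ γℓ, and C^π(r) the multiset of punctured representatives in 𝒜^{s−ℓ}. Then ∑_{u,v ∈ C^π(r)} w(u−v) ≤ |C(r)|²·(r − γℓ)·(2 − (r − γℓ)/(γ(s−ℓ))). -/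
open Finset MulOpposite
open scoped Classical BigOperators

lemma stmt16_sum_comm3 {α β γ' M : Type*} [AddCommMonoid M]
    (s : Finset α) (t : Finset β) (v : Finset γ') (f : α → β → γ' → M) :
    ∑ a ∈ s, ∑ b ∈ t, ∑ c ∈ v, f a b c = ∑ c ∈ v, ∑ a ∈ s, ∑ b ∈ t, f a b c := by
  calc ∑ a ∈ s, ∑ b ∈ t, ∑ c ∈ v, f a b c
      = ∑ a ∈ s, ∑ c ∈ v, ∑ b ∈ t, f a b c :=
        Finset.sum_congr rfl fun a _ => Finset.sum_comm
    _ = ∑ c ∈ v, ∑ a ∈ s, ∑ b ∈ t, f a b c := Finset.sum_comm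

lemma stmt16_sum_comm3' {α β γ' M : Type*} [AddCommMonoid M]
    (s : Finset α) (t : Finset β) (v : Finset γ') (f : α → β → γ' → M) :
    ∑ a ∈ s, ∑ b ∈ t, ∑ c ∈ v, f a b c = ∑ b ∈ t, ∑ c ∈ v, ∑ a ∈ s, f a b c := by
  calc ∑ a ∈ s, ∑ b ∈ t, ∑ c ∈ v, f a b c
      = ∑ b ∈ t, ∑ a ∈ s, ∑ c ∈ v, f a b c := Finset.sum_comm
    _ = ∑ b ∈ t, ∑ c ∈ v, ∑ a ∈ s, f a b c :=
        Finset.sum_congr rfl fun b _ => Finset.sum_comm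

lemma stmt16_conj {A : Type*} [AddCommGroup A] [Fintype A] (χ : AddChar A ℂ) (x : A) :
    (starRingEnd ℂ) (χ x) = χ (-x) := by
  rw [AddChar.map_neg_eq_inv]
  refine (Complex.inv_eq_conj ?_).symm
  refine Complex.norm_eq_one_of_pow_eq_one (n := Fintype.card A) ?_ Fintype.card_ne_zero
  rw [← AddChar.map_nsmul_eq_pow, card_nsmul_eq_zero, AddChar.map_zero_eq_one]

lemma stmt16_zero {R A : Type*} [Ring R] [Fintype R]
    [AddCommGroup A] [Module R A] [Module Rᵐᵒᵖ A] [Fintype A]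
    (χ : AddChar A ℂ)
    (hgenR : ∀ N : Submodule Rᵐᵒᵖ A, (∀ x ∈ N, χ x = 1) → N = ⊥)
    {s : ℕ} (K : Submodule R (Fin s → A))
    (hKright : ∀ (r : R), ∀ z ∈ K, (op r • z : Fin s → A) ∈ K)
    {i : Fin s} (hi : ∃ z ∈ K, z i ≠ 0) (u : Rˣ) :
    ∑ k : K, χ (op (u : R) • (k : Fin s → A) i) = 0 := by
  have hsmul : ∀ (x : A), op (u:R) • (op ((u⁻¹ : Rˣ) : R) • x) = x := by
    intro x
    rw [smul_smul, ← MulOpposite.op_mul, Units.inv_mul, MulOpposite.op_one, one_smul]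
  set f : K →+ A :=
    { toFun := fun k => op (u : R) • (k : Fin s → A) i
      map_zero' := by simp
      map_add' := by intro a b; simp [smul_add] } with hf
  have hne : χ.compAddMonoidHom f ≠ 0 := by
    intro h0
    have htriv : ∀ k : K, χ (op (u : R) • (k : Fin s → A) i) = 1 := by
      intro k
      have := congrArg (fun ψ : AddChar K ℂ => ψ k) h0
      simpa [hf] using this
    set N : Submodule Rᵐᵒᵖ A :=
      { carrier := {a : A | ∃ k : Fin s → A, k ∈ K ∧ k i = a}
        add_mem' := by
          rintro a b ⟨k, hk, rfl⟩ ⟨k', hk', rfl⟩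
          exact ⟨k + k', K.add_mem hk hk', rfl⟩
        zero_mem' := ⟨0, K.zero_mem, rfl⟩
        smul_mem' := by
          rintro c a ⟨k, hk, rfl⟩
          refine ⟨op c.unop • k, ?_, ?_⟩
          · simpa using hKright c.unop k hk
          · simp } with hN
    have hNbot : N = ⊥ := by
      apply hgenR
      rintro x ⟨k, hk, rfl⟩
      have := htriv ⟨op ((u⁻¹ : Rˣ) : R) • k, hKright _ _ hk⟩
      simpa [hsmul] using this
    obtain ⟨z, hz, hzi⟩ := hi
    have hmem : z i ∈ N := ⟨z, hz, rfl⟩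
    rw [hNbot] at hmem
    exact hzi (by simpa using hmem)
  have := AddChar.sum_eq_zero_iff_ne_zero.mpr hne
  simpa [hf] using this

lemma stmt16_final (γ t qR M ρ Sig X : ℝ) (hγ : 0 < γ) (ht0 : 0 < t) (hq0 : 0 < qR)
    (hM0 : 0 ≤ M) (hρt : ρ ≤ γ * t)
    (hXb : M * (γ * t - ρ) ≤ γ * qR⁻¹ * X)
    (hCS : X ^ 2 ≤ (t * qR) * Sig) :
    t * (γ * M ^ 2) - γ * qR⁻¹ * Sig ≤ M ^ 2 * ρ * (2 - ρ / (γ * t)) := by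
  have hA : (M * (γ * t - ρ)) ^ 2 ≤ (γ * qR⁻¹ * X) ^ 2 := by
    have h0 : 0 ≤ M * (γ * t - ρ) := mul_nonneg hM0 (by linarith)
    exact pow_le_pow_left₀ h0 hXb 2
  have h6 : γ ^ 2 * (qR⁻¹) ^ 2 * X ^ 2 ≤ γ ^ 2 * (qR⁻¹) ^ 2 * ((t * qR) * Sig) :=
    mul_le_mul_of_nonneg_left hCS (by positivity)
  have h7 : γ ^ 2 * (qR⁻¹) ^ 2 * ((t * qR) * Sig) = γ ^ 2 * t * (qR⁻¹ * Sig) := by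
    field_simp
  have hY : M ^ 2 * (γ * t - ρ) ^ 2 ≤ γ ^ 2 * t * (qR⁻¹ * Sig) := by
    calc M ^ 2 * (γ * t - ρ) ^ 2 = (M * (γ * t - ρ)) ^ 2 := by ring
      _ ≤ (γ * qR⁻¹ * X) ^ 2 := hA
      _ = γ ^ 2 * (qR⁻¹) ^ 2 * X ^ 2 := by ring
      _ ≤ γ ^ 2 * (qR⁻¹) ^ 2 * ((t * qR) * Sig) := h6
      _ = γ ^ 2 * t * (qR⁻¹ * Sig) := h7
  have h2γt : 0 < γ * t := mul_pos hγ ht0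
  have expand : M ^ 2 * ρ * (2 - ρ / (γ * t))
      = (2 * M ^ 2 * ρ * γ * t - M ^ 2 * ρ ^ 2) / (γ * t) := by
    field_simp
  rw [expand, le_div_iff₀ h2γt]
  nlinarith [hY]

/-- if every coset in `C(r) ⊆ 𝒜^s/K` has average homogeneous weight at
most `r`, with `γℓ ≤ r ≤ γs` and `ℓ < s`, then for the multiset `C^π(r)` of punctured
representatives,
`∑_{u,v ∈ C^π(r)} w(u−v) ≤ |C(r)|²(r − γℓ)(2 − (r − γℓ)/(γ(s−ℓ)))`. -/
theorem stmt16 {R A : Type*} [Ring R] [Fintype R] [DecidableEq R]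
    [AddCommGroup A] [Module R A] [Module Rᵐᵒᵖ A] [SMulCommClass R Rᵐᵒᵖ A] [Fintype A]
    (χ : AddChar A ℂ)
    (hgenL : ∀ N : Submodule R A, (∀ x ∈ N, χ x = 1) → N = ⊥)
    (hgenR : ∀ N : Submodule Rᵐᵒᵖ A, (∀ x ∈ N, χ x = 1) → N = ⊥)
    (hcard : Fintype.card A = Fintype.card R)
    (γ : ℝ) (w : A → ℝ)
    (hw : ∀ a : A, (w a : ℂ) =
      (γ : ℂ) * (1 - (Fintype.card Rˣ : ℂ)⁻¹ * ∑ u : Rˣ, χ (op (u : R) • a)))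
    (s ℓ : ℕ) (K : Submodule R (Fin s → A))
    (hKright : ∀ (r : R), ∀ z ∈ K, (op r • z : Fin s → A) ∈ K)
    (hℓ : (univ.filter fun i : Fin s => ∃ z ∈ K, z i ≠ 0).card = ℓ)
    (hls : ℓ < s)
    (Cr : Finset ((Fin s → A) ⧸ K))
    (r : ℝ) (hrl : γ * ℓ ≤ r) (hru : r ≤ γ * s)
    (havg : ∀ q ∈ Cr, ∃ z : Fin s → A,
      (Submodule.Quotient.mk z : (Fin s → A) ⧸ K) = q ∧
        (Nat.card K : ℝ)⁻¹ * ∑ k : K, ∑ i, w (z i + (k : Fin s → A) i) ≤ r) :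
    ∑ c ∈ Cr, ∑ c' ∈ Cr,
        ∑ i ∈ univ \ (univ.filter fun i : Fin s => ∃ z ∈ K, z i ≠ 0),
          w ((Quotient.out c) i - (Quotient.out c') i) ≤
      (Cr.card : ℝ) ^ 2 * (r - γ * ℓ) *
        (2 - (r - γ * ℓ) / (γ * ((s : ℝ) - (ℓ : ℝ)))) := by
  classical
  set supp : Finset (Fin s) := univ.filter (fun i : Fin s => ∃ z ∈ K, z i ≠ 0) with hsupp_def
  set T : Finset (Fin s) := univ \ supp with hT_def
  have hTmem : ∀ i ∈ T, ∀ k ∈ K, k i = (0 : A) := by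
    intro i hi k hk
    rw [hT_def, mem_sdiff, hsupp_def, mem_filter] at hi
    by_contra h
    exact hi.2 ⟨hi.1, k, hk, h⟩
  have hTcard : T.card = s - ℓ := by
    rw [hT_def, card_sdiff_of_subset (subset_univ _), hℓ, card_univ, Fintype.card_fin]
  have hst : (0:ℝ) < (s:ℝ) - (ℓ:ℝ) := by
    have : (ℓ:ℝ) < (s:ℝ) := by exact_mod_cast hls
    linarith
  have hγ0 : 0 ≤ γ := by nlinarith
  have hq0 : (0:ℝ) < (Fintype.card Rˣ : ℝ) := by exact_mod_cast Fintype.card_pos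
  rcases eq_or_lt_of_le hγ0 with hγ | hγ
  · -- γ = 0
    have hw0 : ∀ a, w a = 0 := by
      intro a
      have h := hw a
      rw [← hγ] at h
      norm_num at h
      exact_mod_cast h
    have hr0 : r = 0 :=
      le_antisymm (by rw [← hγ] at hru; simpa using hru)
        (by rw [← hγ] at hrl; simpa using hrl)
    simp [hw0, hr0, ← hγ]
  -- main case : 0 < γ
  have hκ : (0:ℝ) < (Nat.card K : ℝ) := by
    exact_mod_cast (Nat.card_pos : 0 < Nat.card K)
  have hWle : ∀ c ∈ Cr, ∑ i ∈ T, w (Quotient.out c i) ≤ r - γ * ℓ := by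
    intro c hc
    obtain ⟨z, hz, hzr⟩ := havg c hc
    have hout : ∀ i ∈ T, Quotient.out c i = z i := by
      intro i hi
      have h1 : (Submodule.Quotient.mk (Quotient.out c) : (Fin s → A) ⧸ K)
          = Submodule.Quotient.mk z := by
        rw [hz]
        exact Quotient.out_eq c
      have h2 : Quotient.out c - z ∈ K := (Submodule.Quotient.eq K).mp h1
      have h3 := hTmem i hi _ h2
      have : Quotient.out c i - z i = 0 := h3
      linear_combination (norm := module) this
    have hsuppavg : ∀ i ∈ supp,
        ∑ k : K, w (z i + (k : Fin s → A) i) = γ * (Nat.card K : ℝ) := by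
      intro i hi
      have hiK : ∃ zz ∈ K, zz i ≠ 0 := by
        rw [hsupp_def, mem_filter] at hi
        exact hi.2
      have hz0 : ∀ u : Rˣ,
          ∑ k : K, χ (op (u:R) • (z i + (k : Fin s → A) i)) = 0 := by
        intro u
        have h0 := stmt16_zero χ hgenR K hKright hiK u
        calc ∑ k : K, χ (op (u:R) • (z i + (k : Fin s → A) i))
            = ∑ k : K, χ (op (u:R) • z i) * χ (op (u:R) • (k : Fin s → A) i) := by
              refine Finset.sum_congr rfl fun k _ => ?_
              rw [smul_add, AddChar.map_add_eq_mul]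
          _ = χ (op (u:R) • z i) * ∑ k : K, χ (op (u:R) • (k : Fin s → A) i) :=
              (Finset.mul_sum _ _ _).symm
          _ = 0 := by rw [h0, mul_zero]
      have hC : ((∑ k : K, w (z i + (k : Fin s → A) i) : ℝ) : ℂ)
          = ((γ * (Nat.card K : ℝ) : ℝ) : ℂ) := by
        push_cast
        simp only [hw]
        rw [← Finset.mul_sum]
        congr 1
        rw [Finset.sum_sub_distrib, ← Finset.mul_sum, Finset.sum_comm]
        rw [Finset.sum_eq_zero fun u _ => hz0 u, mul_zero, sub_zero]
        simp [Finset.sum_const, Nat.card_eq_fintype_card, Finset.card_univ]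
      exact_mod_cast hC
    have hTavg : ∀ i ∈ T,
        ∑ k : K, w (z i + (k : Fin s → A) i) = (Nat.card K : ℝ) * w (z i) := by
      intro i hi
      rw [Finset.sum_congr rfl fun k _ => by rw [hTmem i hi _ k.2, add_zero]]
      simp [Finset.sum_const, Nat.card_eq_fintype_card, Finset.card_univ, mul_comm]
    have htot : ∑ k : K, ∑ i, w (z i + (k : Fin s → A) i)
        = (Nat.card K : ℝ) * (γ * ℓ + ∑ i ∈ T, w (z i)) := by
      rw [Finset.sum_comm]
      rw [← Finset.sum_sdiff (subset_univ supp), ← hT_def]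
      rw [Finset.sum_congr rfl hTavg, Finset.sum_congr rfl hsuppavg]
      rw [Finset.sum_const, hℓ, ← Finset.mul_sum]
      push_cast
      ring
    have hle : γ * ℓ + ∑ i ∈ T, w (z i) ≤ r := by
      rw [htot] at hzr
      rw [inv_mul_cancel_left₀ (ne_of_gt hκ)] at hzr
      exact hzr
    calc ∑ i ∈ T, w (Quotient.out c i) = ∑ i ∈ T, w (z i) :=
          Finset.sum_congr rfl fun i hi => by rw [hout i hi]
      _ ≤ r - γ * ℓ := by linarith
  set S : Fin s → Rˣ → ℂ := fun i u => ∑ c ∈ Cr, χ (op (u:R) • Quotient.out c i)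
    with hS_def
  have hwsub : ∀ a b : A, (w (a - b) : ℂ)
      = (γ:ℂ) - (γ:ℂ) * (Fintype.card Rˣ : ℂ)⁻¹ *
          ∑ u : Rˣ, χ (op (u:R) • a) * (starRingEnd ℂ) (χ (op (u:R) • b)) := by
    intro a b
    rw [hw]
    have h1 : ∀ u : Rˣ, χ (op (u:R) • (a - b))
        = χ (op (u:R) • a) * (starRingEnd ℂ) (χ (op (u:R) • b)) := by
      intro u
      rw [stmt16_conj, ← AddChar.map_add_eq_mul, ← smul_neg, ← smul_add,
        ← sub_eq_add_neg]
    rw [Finset.sum_congr rfl fun u _ => h1 u]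
    ring
  have per_i : ∀ i ∈ T, ∑ c ∈ Cr, ∑ c' ∈ Cr, w (Quotient.out c i - Quotient.out c' i)
      = γ * (Cr.card:ℝ)^2 - γ * (Fintype.card Rˣ : ℝ)⁻¹ *
          ∑ u : Rˣ, Complex.normSq (S i u) := by
    intro i _
    have hℂ : ((∑ c ∈ Cr, ∑ c' ∈ Cr, w (Quotient.out c i - Quotient.out c' i) : ℝ) : ℂ)
        = ((γ * (Cr.card:ℝ)^2 - γ * (Fintype.card Rˣ : ℝ)⁻¹ *
            ∑ u : Rˣ, Complex.normSq (S i u) : ℝ) : ℂ) := by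
      push_cast
      calc (∑ c ∈ Cr, ∑ c' ∈ Cr, (w (Quotient.out c i - Quotient.out c' i) : ℂ))
          = ∑ c ∈ Cr, ∑ c' ∈ Cr, ((γ:ℂ) - (γ:ℂ) * (Fintype.card Rˣ : ℂ)⁻¹ *
              ∑ u : Rˣ, χ (op (u:R) • Quotient.out c i) *
                (starRingEnd ℂ) (χ (op (u:R) • Quotient.out c' i))) :=
            Finset.sum_congr rfl fun c _ => Finset.sum_congr rfl fun c' _ => hwsub _ _
        _ = (Cr.card : ℂ)^2 * (γ:ℂ) - (γ:ℂ) * (Fintype.card Rˣ : ℂ)⁻¹ *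
              ∑ u : Rˣ, ∑ c ∈ Cr, ∑ c' ∈ Cr,
                χ (op (u:R) • Quotient.out c i) *
                  (starRingEnd ℂ) (χ (op (u:R) • Quotient.out c' i)) := by
            rw [← stmt16_sum_comm3]
            simp only [Finset.sum_sub_distrib, ← Finset.mul_sum, Finset.sum_const,
              nsmul_eq_mul]
            push_cast
            ring
        _ = (Cr.card : ℂ)^2 * (γ:ℂ) - (γ:ℂ) * (Fintype.card Rˣ : ℂ)⁻¹ *
              ∑ u : Rˣ, (Complex.normSq (S i u) : ℂ) := by
            congr 1
            congr 1
            refine Finset.sum_congr rfl fun u _ => ?_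
            rw [← Complex.mul_conj]
            simp only [hS_def]
            rw [map_sum, Finset.sum_mul_sum]
        _ = (γ:ℂ) * (Cr.card:ℂ)^2 - (γ:ℂ) * ((Fintype.card Rˣ : ℂ))⁻¹ *
              ∑ u : Rˣ, (Complex.normSq (S i u) : ℂ) := by ring
    exact_mod_cast hℂ
  have hEre : ∀ c ∈ Cr,
      γ * (Fintype.card Rˣ : ℝ)⁻¹ *
          ∑ i ∈ T, ∑ u : Rˣ, (χ (op (u:R) • Quotient.out c i)).re
        = γ * (T.card : ℝ) - ∑ i ∈ T, w (Quotient.out c i) := by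
    intro c _
    have h1 : ((∑ i ∈ T, w (Quotient.out c i) : ℝ) : ℂ)
        = ((γ * (T.card : ℝ) : ℝ) : ℂ) - ((γ * (Fintype.card Rˣ : ℝ)⁻¹ : ℝ) : ℂ) *
            ∑ i ∈ T, ∑ u : Rˣ, χ (op (u:R) • Quotient.out c i) := by
      push_cast
      simp only [hw]
      rw [← Finset.mul_sum, Finset.sum_sub_distrib, Finset.sum_const, nsmul_eq_mul,
        ← Finset.mul_sum]
      push_cast
      ring
    have h2 := congrArg Complex.re h1
    simp only [Complex.ofReal_re, Complex.sub_re, Complex.re_ofReal_mul,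
      Complex.re_sum] at h2
    rw [h2]
    ring
  have htRv : ((T.card : ℕ) : ℝ) = (s:ℝ) - (ℓ:ℝ) := by
    rw [hTcard, Nat.cast_sub hls.le]
  have htR0 : (0:ℝ) < (T.card : ℝ) := by rw [htRv]; exact hst
  have hρ0 : 0 ≤ r - γ * ℓ := by linarith
  have hρt : r - γ * ℓ ≤ γ * (T.card : ℝ) := by rw [htRv, mul_sub]; linarith
  have hXb : (Cr.card : ℝ) * (γ * (T.card:ℝ) - (r - γ * ℓ))
      ≤ γ * (Fintype.card Rˣ : ℝ)⁻¹ * ∑ c ∈ Cr, ∑ i ∈ T, ∑ u : Rˣ,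
          (χ (op (u:R) • Quotient.out c i)).re := by
    calc (Cr.card : ℝ) * (γ * (T.card:ℝ) - (r - γ * ℓ))
        = ∑ _c ∈ Cr, (γ * (T.card:ℝ) - (r - γ * ℓ)) := by
          rw [Finset.sum_const, nsmul_eq_mul]
      _ ≤ ∑ c ∈ Cr, γ * (Fintype.card Rˣ : ℝ)⁻¹ * ∑ i ∈ T, ∑ u : Rˣ,
            (χ (op (u:R) • Quotient.out c i)).re := by
          refine Finset.sum_le_sum fun c hc => ?_
          rw [hEre c hc]
          have := hWle c hc
          linarith
      _ = γ * (Fintype.card Rˣ : ℝ)⁻¹ * ∑ c ∈ Cr, ∑ i ∈ T, ∑ u : Rˣ,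
            (χ (op (u:R) • Quotient.out c i)).re := by
          rw [Finset.mul_sum]
  have hXS : ∑ c ∈ Cr, ∑ i ∈ T, ∑ u : Rˣ, (χ (op (u:R) • Quotient.out c i)).re
      = ∑ i ∈ T, ∑ u : Rˣ, (S i u).re := by
    rw [stmt16_sum_comm3']
    refine Finset.sum_congr rfl fun i _ => Finset.sum_congr rfl fun u _ => ?_
    rw [← Complex.re_sum]
  rw [hXS] at hXb
  have hre2 : ∀ z : ℂ, (z.re)^2 ≤ Complex.normSq z := by
    intro z
    rw [Complex.normSq_apply]
    nlinarith [sq_nonneg z.im]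
  have hCS : (∑ i ∈ T, ∑ u : Rˣ, (S i u).re)^2
      ≤ ((T.card : ℝ) * (Fintype.card Rˣ : ℝ)) *
          ∑ i ∈ T, ∑ u : Rˣ, Complex.normSq (S i u) := by
    have h1 : (∑ p ∈ T ×ˢ (univ : Finset Rˣ), (S p.1 p.2).re)^2
        ≤ (#(T ×ˢ (univ : Finset Rˣ)) : ℝ) *
            ∑ p ∈ T ×ˢ (univ : Finset Rˣ), ((S p.1 p.2).re)^2 :=
      sq_sum_le_card_mul_sum_sq
    simp only [Finset.sum_product, Finset.card_product, Finset.card_univ] at h1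
    push_cast at h1
    calc (∑ i ∈ T, ∑ u : Rˣ, (S i u).re)^2
        ≤ ((T.card : ℝ) * (Fintype.card Rˣ : ℝ)) *
            ∑ i ∈ T, ∑ u : Rˣ, ((S i u).re)^2 := h1
      _ ≤ ((T.card : ℝ) * (Fintype.card Rˣ : ℝ)) *
            ∑ i ∈ T, ∑ u : Rˣ, Complex.normSq (S i u) := by
          refine mul_le_mul_of_nonneg_left ?_
            (mul_nonneg (Nat.cast_nonneg _) (Nat.cast_nonneg _))
          exact Finset.sum_le_sum fun i _ => Finset.sum_le_sum fun u _ => hre2 _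
  have hgoalLHS : ∑ c ∈ Cr, ∑ c' ∈ Cr, ∑ i ∈ T, w (Quotient.out c i - Quotient.out c' i)
      = (T.card:ℝ) * (γ * (Cr.card:ℝ)^2) - γ * (Fintype.card Rˣ : ℝ)⁻¹ *
          ∑ i ∈ T, ∑ u : Rˣ, Complex.normSq (S i u) := by
    rw [stmt16_sum_comm3]
    rw [Finset.sum_congr rfl per_i]
    rw [Finset.sum_sub_distrib, Finset.sum_const, nsmul_eq_mul, ← Finset.mul_sum,
      Finset.mul_sum]
  rw [hgoalLHS, ← htRv]
  have hSig0 : 0 ≤ ∑ i ∈ T, ∑ u : Rˣ, Complex.normSq (S i u) :=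
    Finset.sum_nonneg fun i _ => Finset.sum_nonneg fun u _ => Complex.normSq_nonneg _
  exact stmt16_final γ (T.card : ℝ) (Fintype.card Rˣ : ℝ) (Cr.card : ℝ) (r - γ * ℓ)
    (∑ i ∈ T, ∑ u : Rˣ, Complex.normSq (S i u)) (∑ i ∈ T, ∑ u : Rˣ, (S i u).re)
    hγ htR0 hq0 (Nat.cast_nonneg _) hρt hXb hCS
end
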